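/- The peeling decoder is confluent: for a fixed erasure set E, any two maximal sequences of dangling-bit removals terminate with the same residual set of erased bits, namely the unique maximal stopping set contained in E. -/

import Mathlib

/-- A subset `S` of bit nodes is a stopping set for the Tanner graph of `H`. -/
def IsStoppingSet {r n : ℕ} (H : Matrix (Fin r) (Fin n) (ZMod 2)) (S : Finset (Fin n)) : Prop :=
  ∀ i : Fin r, (S.filter (fun j => H i j = 1)).card ≠ 1

/-- `j` is a dangling bit of `S`. -/
def IsDanglingBit {r n : ℕ} (H : Matrix (Fin r) (Fin n) (ZMod 2)) (S : Finset (Fin n))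
    (j : Fin n) : Prop :=
  j ∈ S ∧ ∃ i : Fin r, H i j = 1 ∧ (S.filter (fun k => H i k = 1)).card = 1

/-- One step of the peeling decoder: remove a dangling bit from the erasure. -/
def PeelStep {r n : ℕ} (H : Matrix (Fin r) (Fin n) (ZMod 2)) (S S' : Finset (Fin n)) : Prop :=
  ∃ j : Fin n, IsDanglingBit H S j ∧ S' = S.erase j

/-! Peeling never removes a bit of a stopping set contained in the current erasure, since
such a bit would be the unique erased neighbour of some check inside the stopping set
as well. Stopping sets are closed under union, so `E` contains a largest one `M`; a
terminal peeling residue is a stopping set inside `E` that contains `M`, hence equals `M`. -/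

open Finset

variable {r n : ℕ} {H : Matrix (Fin r) (Fin n) (ZMod 2)}

lemma IsStoppingSet.card_filter_eq_zero {S T : Finset (Fin n)} {i : Fin r}
    (hS : IsStoppingSet H S) (hST : S ⊆ T) (hT : (T.filter (fun j => H i j = 1)).card = 1) :
    (S.filter (fun j => H i j = 1)).card = 0 := by
  have := card_le_card (filter_subset_filter (fun j => H i j = 1) hST)
  have := hS i
  omega

lemma IsStoppingSet.union {S T : Finset (Fin n)} (hS : IsStoppingSet H S)
    (hT : IsStoppingSet H T) : IsStoppingSet H (S ∪ T) := by
  intro i hcard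
  have hS0 := hS.card_filter_eq_zero subset_union_left hcard
  have hT0 := hT.card_filter_eq_zero subset_union_right hcard
  have := card_union_le (S.filter (fun j => H i j = 1)) (T.filter (fun j => H i j = 1))
  rw [← filter_union, hcard] at this
  omega

lemma isStoppingSet_of_forall_not_peelStep {R : Finset (Fin n)}
    (hR : ∀ R', ¬ PeelStep H R R') : IsStoppingSet H R := by
  intro i hcard
  obtain ⟨j, hj⟩ := card_eq_one.1 hcard
  have hjR : j ∈ R.filter (fun k => H i k = 1) := hj ▸ mem_singleton_self j
  rw [mem_filter] at hjR
  exact hR (R.erase j) ⟨j, ⟨hjR.1, i, hjR.2, hcard⟩, rfl⟩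

lemma IsStoppingSet.notMem_of_isDanglingBit {S T : Finset (Fin n)} {j : Fin n}
    (hS : IsStoppingSet H S) (hST : S ⊆ T) (hj : IsDanglingBit H T j) : j ∉ S := by
  obtain ⟨-, i, hij, hcard⟩ := hj
  intro hjS
  exact (card_pos.2 ⟨j, mem_filter.2 ⟨hjS, hij⟩⟩).ne' (hS.card_filter_eq_zero hST hcard)

lemma PeelStep.subset {S S' : Finset (Fin n)} (h : PeelStep H S S') : S' ⊆ S := by
  obtain ⟨j, -, rfl⟩ := h
  exact erase_subset j S

lemma IsStoppingSet.subset_of_peelStep {S T T' : Finset (Fin n)} (hS : IsStoppingSet H S)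
    (hST : S ⊆ T) (h : PeelStep H T T') : S ⊆ T' := by
  obtain ⟨j, hj, rfl⟩ := h
  exact subset_erase.2 ⟨hST, hS.notMem_of_isDanglingBit hST hj⟩

lemma subset_of_reflTransGen_peelStep {E R : Finset (Fin n)}
    (h : Relation.ReflTransGen (PeelStep H) E R) : R ⊆ E := by
  induction h with
  | refl => exact Subset.rfl
  | tail _ hstep ih => exact (hstep.subset).trans ih

lemma IsStoppingSet.subset_of_reflTransGen_peelStep {S E R : Finset (Fin n)}
    (hS : IsStoppingSet H S) (hSE : S ⊆ E) (h : Relation.ReflTransGen (PeelStep H) E R) :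
    S ⊆ R := by
  induction h with
  | refl => exact hSE
  | tail _ hstep ih => exact hS.subset_of_peelStep ih hstep

section

variable (H)

lemma isStoppingSet_empty : IsStoppingSet H ∅ := by
  simp [IsStoppingSet]

instance : DecidablePred (IsStoppingSet H) := fun S =>
  inferInstanceAs (Decidable (∀ i, (S.filter (fun j => H i j = 1)).card ≠ 1))

def maxStoppingSet (E : Finset (Fin n)) : Finset (Fin n) :=
  (E.powerset.filter (IsStoppingSet H)).sup id

lemma maxStoppingSet_subset (E : Finset (Fin n)) : maxStoppingSet H E ⊆ E :=
  Finset.sup_le fun _ hT => mem_powerset.1 (mem_filter.1 hT).1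

lemma isStoppingSet_maxStoppingSet (E : Finset (Fin n)) :
    IsStoppingSet H (maxStoppingSet H E) :=
  sup_induction (isStoppingSet_empty H) (fun _ hS _ hT => hS.union hT)
    fun _ hT => (mem_filter.1 hT).2

end

lemma IsStoppingSet.subset_maxStoppingSet {S E : Finset (Fin n)} (hS : IsStoppingSet H S)
    (hSE : S ⊆ E) : S ⊆ maxStoppingSet H E :=
  le_sup (f := id) (mem_filter.2 ⟨mem_powerset.2 hSE, hS⟩)

/-- The peeling decoder is confluent: for a fixed erasure set `E` there
is a unique maximal stopping set `M ⊆ E`, and every maximal sequence of dangling-bit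
removals starting from `E` terminates with residual set exactly `M`. -/
theorem peeling_confluent
    {r n : ℕ} (H : Matrix (Fin r) (Fin n) (ZMod 2)) (E : Finset (Fin n)) :
    ∃ M : Finset (Fin n), M ⊆ E ∧ IsStoppingSet H M ∧
      (∀ T ⊆ E, IsStoppingSet H T → T ⊆ M) ∧
      (∀ R : Finset (Fin n), Relation.ReflTransGen (PeelStep H) E R →
        (∀ R', ¬ PeelStep H R R') → R = M) := by
  have hM := isStoppingSet_maxStoppingSet H E
  refine ⟨maxStoppingSet H E, maxStoppingSet_subset H E, hM,
    fun T hTE hT => hT.subset_maxStoppingSet hTE, fun R hER hR => ?_⟩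
  have hRM : R ⊆ maxStoppingSet H E :=
    (isStoppingSet_of_forall_not_peelStep hR).subset_maxStoppingSet
      (subset_of_reflTransGen_peelStep hER)
  exact Subset.antisymm hRM (hM.subset_of_reflTransGen_peelStep (maxStoppingSet_subset H E) hER)
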